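/- Let E and F be real inner product spaces, and let f, h : E × F → ℝ be such that for every y ∈ F the functions x ↦ f(x,y) and x ↦ h(x,y) are twice continuously differentiable with |D²(f(·,y))(x)(v,v)| ≤ L₁·D²(h(·,y))(x)(v,v) and D²(h(·,y))(x)(v,v) ≥ σ‖v‖² for all x, v, and symmetrically for every x ∈ E the functions y ↦ f(x,y) and y ↦ h(x,y) are twice continuously differentiable with |D²(f(x,·))(y)(w,w)| ≤ L₂·D²(h(x,·))(y)(w,w) and D²(h(x,·))(y)(w,w) ≥ σ‖w‖² (σ > 0, L₁, L₂ > 0). Let 0 < η < 1/max{L₁, L₂}, (x⁻, y⁻) ∈ E × F, let x₊ be a global minimizer over E of x ↦ ⟪∇(f(·,y⁻))(x⁻), x − x⁻⟫ + (1/η)·D_{h(·,y⁻)}(x, x⁻), and let y₊ be a global minimizer over F of y ↦ ⟪∇(f(x₊,·))(y⁻), y − y⁻⟫ + (1/η)·D_{h(x₊,·)}(y, y⁻). Then f(x⁻, y⁻) − f(x₊, y₊) ≥ (1/η − max{L₁, L₂})·(σ/2)·(‖x₊ − x⁻‖² + ‖y₊ − y⁻‖²). (Sufficient decrease of one Bregman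 proximal alternating linearized minimization step.) -/

import Mathlib

/-!
Restricted to a line `t ↦ v + t • (u - v)`, a bound `c ≤ k''` on the second derivative gives
`c / 2 ≤ k 1 - k 0 - k' 0`, because `k t - c t² / 2` is convex and so lies above its tangent
at `0`. This turns `σ`-strong convexity of `h` into `D_h(u, v) ≥ σ/2 ‖u - v‖²` and relative
smoothness into `D_f ≤ L D_h`. Comparing the proximal model at its minimizer with its value `0` at
the previous iterate then gives, in each block, `f(old) - f(new) ≥ (1/η - L) D_h ≥
(1/η - L)(σ/2)‖new - old‖²`, and the two block decreases add up.
-/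

open scoped RealInnerProductSpace

theorem half_mul_le_sub_sub_deriv_of_le_deriv2 {k k' k'' : ℝ → ℝ} {c : ℝ}
    (hk : ∀ t, HasDerivAt k (k' t) t) (hk' : ∀ t, HasDerivAt k' (k'' t) t)
    (hc : ∀ t, c ≤ k'' t) : c / 2 ≤ k 1 - k 0 - k' 0 := by
  have hq (t : ℝ) : HasDerivAt (fun s => k s - c / 2 * s ^ 2) (k' t - c * t) t :=
    ((hk t).fun_sub ((hasDerivAt_pow 2 t).const_mul (c / 2))).congr_deriv (by ring)
  have hq' (t : ℝ) : HasDerivAt (fun s => k' s - c * s) (k'' t - c) t := by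
    simpa using (hk' t).fun_sub ((hasDerivAt_id t).const_mul c)
  have hconv : ConvexOn ℝ Set.univ (fun t => k t - c / 2 * t ^ 2) :=
    convexOn_of_hasDerivWithinAt2_nonneg convex_univ
      (fun t _ => (hq t).continuousAt.continuousWithinAt)
      (fun t _ => (hq t).hasDerivWithinAt) (fun t _ => (hq' t).hasDerivWithinAt)
      (fun t _ => sub_nonneg.2 (hc t))
  have := hconv.le_slope_of_hasDerivAt (Set.mem_univ 0) (Set.mem_univ 1) zero_lt_one (hq 0)
  simp only [slope, sub_zero, inv_one, one_smul, vsub_eq_sub, mul_zero, one_pow, mul_one] at this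
  linarith

section Bregman

variable {E : Type*} [NormedAddCommGroup E] [NormedSpace ℝ E]

noncomputable def bregmanDiv (g : E → ℝ) (u v : E) : ℝ := g u - g v - fderiv ℝ g v (u - v)

variable {g : E → ℝ}

theorem ContDiff.hasDerivAt_comp_add_smul (hg : ContDiff ℝ 2 g) (v w : E) (t : ℝ) :
    HasDerivAt (fun s : ℝ => g (v + s • w)) (fderiv ℝ g (v + t • w) w) t :=
  (hg.differentiable (by norm_num) _).hasFDerivAt.comp_hasDerivAt t
    (((hasDerivAt_id t).smul_const w).const_add v |>.congr_deriv (one_smul ℝ w))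

theorem ContDiff.hasDerivAt_fderiv_comp_add_smul (hg : ContDiff ℝ 2 g) (v w : E) (t : ℝ) :
    HasDerivAt (fun s : ℝ => fderiv ℝ g (v + s • w) w)
      (iteratedFDeriv ℝ 2 g (v + t • w) ![w, w]) t := by
  have hdiff : Differentiable ℝ (fderiv ℝ g) :=
    (hg.fderiv_right (m := 1) (by norm_num)).differentiable (by norm_num)
  have := ((hdiff _).hasFDerivAt.comp_hasDerivAt t
    (((hasDerivAt_id t).smul_const w).const_add v |>.congr_deriv (one_smul ℝ w))).clm_apply
    (hasDerivAt_const t w)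
  simpa [iteratedFDeriv_two_apply] using this

theorem mul_norm_sq_le_bregmanDiv (hg : ContDiff ℝ 2 g) {m : ℝ}
    (hm : ∀ x v, m * ‖v‖ ^ 2 ≤ iteratedFDeriv ℝ 2 g x ![v, v]) (u v : E) :
    m / 2 * ‖u - v‖ ^ 2 ≤ bregmanDiv g u v := by
  have := half_mul_le_sub_sub_deriv_of_le_deriv2 (hg.hasDerivAt_comp_add_smul v (u - v))
    (hg.hasDerivAt_fderiv_comp_add_smul v (u - v)) (fun t => hm _ (u - v))
  simp only [one_smul, zero_smul, add_zero, add_sub_cancel] at this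
  rw [bregmanDiv]
  linarith

theorem bregmanDiv_le_mul_bregmanDiv {f h : E → ℝ} (hf : ContDiff ℝ 2 f) (hh : ContDiff ℝ 2 h)
    {L : ℝ} (hrel : ∀ x v, iteratedFDeriv ℝ 2 f x ![v, v] ≤ L * iteratedFDeriv ℝ 2 h x ![v, v])
    (u v : E) : bregmanDiv f u v ≤ L * bregmanDiv h u v := by
  have := half_mul_le_sub_sub_deriv_of_le_deriv2 (c := 0)
    (fun t => ((hh.hasDerivAt_comp_add_smul v (u - v) t).const_mul L).fun_sub
      (hf.hasDerivAt_comp_add_smul v (u - v) t))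
    (fun t => ((hh.hasDerivAt_fderiv_comp_add_smul v (u - v) t).const_mul L).fun_sub
      (hf.hasDerivAt_fderiv_comp_add_smul v (u - v) t))
    (fun t => sub_nonneg.2 (hrel _ (u - v)))
  simp only [one_smul, zero_smul, add_zero, add_sub_cancel] at this
  rw [bregmanDiv, bregmanDiv]
  linarith

theorem le_sub_of_bregman_proximal_step {f h : E → ℝ} (hf : ContDiff ℝ 2 f)
    (hh : ContDiff ℝ 2 h) {L σ η : ℝ}
    (hrel : ∀ x v, iteratedFDeriv ℝ 2 f x ![v, v] ≤ L * iteratedFDeriv ℝ 2 h x ![v, v])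
    (hstrong : ∀ x v, σ * ‖v‖ ^ 2 ≤ iteratedFDeriv ℝ 2 h x ![v, v]) (hLη : L ≤ 1 / η)
    {x₀ x₁ : E} (hstep : fderiv ℝ f x₀ (x₁ - x₀) + 1 / η * bregmanDiv h x₁ x₀ ≤ 0) :
    (1 / η - L) * (σ / 2) * ‖x₁ - x₀‖ ^ 2 ≤ f x₀ - f x₁ := by
  have hsmooth := bregmanDiv_le_mul_bregmanDiv hf hh hrel x₁ x₀
  have hconvex := mul_norm_sq_le_bregmanDiv hh hstrong x₁ x₀
  calc (1 / η - L) * (σ / 2) * ‖x₁ - x₀‖ ^ 2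
      = (1 / η - L) * (σ / 2 * ‖x₁ - x₀‖ ^ 2) := by ring
    _ ≤ (1 / η - L) * bregmanDiv h x₁ x₀ := by gcongr
    _ ≤ f x₀ - f x₁ := by rw [bregmanDiv] at hsmooth; linarith

end Bregman

theorem bregman_palm_sufficient_decrease_general
    {E F : Type*} [NormedAddCommGroup E] [InnerProductSpace ℝ E]
    [NormedAddCommGroup F] [InnerProductSpace ℝ F]
    (f h : E × F → ℝ)
    (gfx : E → F → E) (gfy : E → F → F) (ghx : E → F → E) (ghy : E → F → F)
    (σ L₁ L₂ η : ℝ)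
    (hfx : ∀ y : F, ContDiff ℝ 2 (fun x : E => f (x, y)))
    (hfy : ∀ x : E, ContDiff ℝ 2 (fun y : F => f (x, y)))
    (hhx : ∀ y : F, ContDiff ℝ 2 (fun x : E => h (x, y)))
    (hhy : ∀ x : E, ContDiff ℝ 2 (fun y : F => h (x, y)))
    (hgfx : ∀ (y : F) (x v : E), fderiv ℝ (fun x' : E => f (x', y)) x v = ⟪gfx x y, v⟫)
    (hgfy : ∀ (x : E) (y w : F), fderiv ℝ (fun y' : F => f (x, y')) y w = ⟪gfy x y, w⟫)
    (hghx : ∀ (y : F) (x v : E), fderiv ℝ (fun x' : E => h (x', y)) x v = ⟪ghx x y, v⟫)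
    (hghy : ∀ (x : E) (y w : F), fderiv ℝ (fun y' : F => h (x, y')) y w = ⟪ghy x y, w⟫)
    (hσ : 0 < σ)
    (hrelx : ∀ (y : F) (x v : E),
      |iteratedFDeriv ℝ 2 (fun x' : E => f (x', y)) x ![v, v]| ≤
        L₁ * iteratedFDeriv ℝ 2 (fun x' : E => h (x', y)) x ![v, v])
    (hrely : ∀ (x : E) (y w : F),
      |iteratedFDeriv ℝ 2 (fun y' : F => f (x, y')) y ![w, w]| ≤
        L₂ * iteratedFDeriv ℝ 2 (fun y' : F => h (x, y')) y ![w, w])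
    (hstrongx : ∀ (y : F) (x v : E),
      iteratedFDeriv ℝ 2 (fun x' : E => h (x', y)) x ![v, v] ≥ σ * ‖v‖ ^ 2)
    (hstrongy : ∀ (x : E) (y w : F),
      iteratedFDeriv ℝ 2 (fun y' : F => h (x, y')) y ![w, w] ≥ σ * ‖w‖ ^ 2)
    (hη0 : 0 < η) (hη1 : η < 1 / max L₁ L₂)
    (xm : E) (ym : F) (xp : E) (yp : F)
    (hminx : ∀ x : E,
      ⟪gfx xm ym, xp - xm⟫ + (1 / η) * (h (xp, ym) - h (xm, ym) - ⟪ghx xm ym, xp - xm⟫) ≤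
        ⟪gfx xm ym, x - xm⟫ + (1 / η) * (h (x, ym) - h (xm, ym) - ⟪ghx xm ym, x - xm⟫))
    (hminy : ∀ y : F,
      ⟪gfy xp ym, yp - ym⟫ + (1 / η) * (h (xp, yp) - h (xp, ym) - ⟪ghy xp ym, yp - ym⟫) ≤
        ⟪gfy xp ym, y - ym⟫ + (1 / η) * (h (xp, y) - h (xp, ym) - ⟪ghy xp ym, y - ym⟫)) :
    f (xm, ym) - f (xp, yp) ≥
      (1 / η - max L₁ L₂) * (σ / 2) * (‖xp - xm‖ ^ 2 + ‖yp - ym‖ ^ 2) := by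
  have hmax : max L₁ L₂ ≤ 1 / η :=
    ((lt_one_div hη0 (one_div_pos.mp (hη0.trans hη1))).mp hη1).le
  have hx := le_sub_of_bregman_proximal_step (hfx ym) (hhx ym)
    (fun x v => (le_abs_self _).trans (hrelx ym x v)) (hstrongx ym) ((le_max_left _ _).trans hmax)
    (by simpa [bregmanDiv, hgfx, hghx] using hminx xm)
  have hy := le_sub_of_bregman_proximal_step (hfy xp) (hhy xp)
    (fun y w => (le_abs_self _).trans (hrely xp y w)) (hstrongy xp) ((le_max_right _ _).trans hmax)
    (by simpa [bregmanDiv, hgfy, hghy] using hminy ym)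
  calc (1 / η - max L₁ L₂) * (σ / 2) * (‖xp - xm‖ ^ 2 + ‖yp - ym‖ ^ 2)
      = (1 / η - max L₁ L₂) * (σ / 2) * ‖xp - xm‖ ^ 2
        + (1 / η - max L₁ L₂) * (σ / 2) * ‖yp - ym‖ ^ 2 := by ring
    _ ≤ (1 / η - L₁) * (σ / 2) * ‖xp - xm‖ ^ 2 + (1 / η - L₂) * (σ / 2) * ‖yp - ym‖ ^ 2 := by
      gcongr
      exacts [le_max_left _ _, le_max_right _ _]
    _ ≤ f (xm, ym) - f (xp, yp) := by linarith

/-- **Sufficient decrease of one Bregman proximal alternating linearized minimization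
(B-PALM) step.** Under relative bi-smoothness of `f` w.r.t. a `σ`-strongly bi-convex
kernel `h`, with `0 < η < 1/max{L₁,L₂}`, the B-PALM step satisfies
`f(x⁻,y⁻) − f(x₊,y₊) ≥ (1/η − max{L₁,L₂})(σ/2)(‖x₊−x⁻‖² + ‖y₊−y⁻‖²)`. -/
theorem bregman_palm_sufficient_decrease
    {E F : Type*} [NormedAddCommGroup E] [InnerProductSpace ℝ E]
    [NormedAddCommGroup F] [InnerProductSpace ℝ F]
    (f h : E × F → ℝ)
    (gfx : E → F → E) (gfy : E → F → F) (ghx : E → F → E) (ghy : E → F → F)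
    (σ L₁ L₂ η : ℝ)
    (hfx : ∀ y : F, ContDiff ℝ 2 (fun x : E => f (x, y)))
    (hfy : ∀ x : E, ContDiff ℝ 2 (fun y : F => f (x, y)))
    (hhx : ∀ y : F, ContDiff ℝ 2 (fun x : E => h (x, y)))
    (hhy : ∀ x : E, ContDiff ℝ 2 (fun y : F => h (x, y)))
    (hgfx : ∀ (y : F) (x v : E), fderiv ℝ (fun x' : E => f (x', y)) x v = ⟪gfx x y, v⟫)
    (hgfy : ∀ (x : E) (y w : F), fderiv ℝ (fun y' : F => f (x, y')) y w = ⟪gfy x y, w⟫)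
    (hghx : ∀ (y : F) (x v : E), fderiv ℝ (fun x' : E => h (x', y)) x v = ⟪ghx x y, v⟫)
    (hghy : ∀ (x : E) (y w : F), fderiv ℝ (fun y' : F => h (x, y')) y w = ⟪ghy x y, w⟫)
    (hσ : 0 < σ) (hL₁ : 0 < L₁) (hL₂ : 0 < L₂)
    (hrelx : ∀ (y : F) (x v : E),
      |iteratedFDeriv ℝ 2 (fun x' : E => f (x', y)) x ![v, v]| ≤
        L₁ * iteratedFDeriv ℝ 2 (fun x' : E => h (x', y)) x ![v, v])
    (hrely : ∀ (x : E) (y w : F),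
      |iteratedFDeriv ℝ 2 (fun y' : F => f (x, y')) y ![w, w]| ≤
        L₂ * iteratedFDeriv ℝ 2 (fun y' : F => h (x, y')) y ![w, w])
    (hstrongx : ∀ (y : F) (x v : E),
      iteratedFDeriv ℝ 2 (fun x' : E => h (x', y)) x ![v, v] ≥ σ * ‖v‖ ^ 2)
    (hstrongy : ∀ (x : E) (y w : F),
      iteratedFDeriv ℝ 2 (fun y' : F => h (x, y')) y ![w, w] ≥ σ * ‖w‖ ^ 2)
    (hη0 : 0 < η) (hη1 : η < 1 / max L₁ L₂)
    (xm : E) (ym : F) (xp : E) (yp : F)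
    (hminx : ∀ x : E,
      ⟪gfx xm ym, xp - xm⟫ + (1 / η) * (h (xp, ym) - h (xm, ym) - ⟪ghx xm ym, xp - xm⟫) ≤
        ⟪gfx xm ym, x - xm⟫ + (1 / η) * (h (x, ym) - h (xm, ym) - ⟪ghx xm ym, x - xm⟫))
    (hminy : ∀ y : F,
      ⟪gfy xp ym, yp - ym⟫ + (1 / η) * (h (xp, yp) - h (xp, ym) - ⟪ghy xp ym, yp - ym⟫) ≤
        ⟪gfy xp ym, y - ym⟫ + (1 / η) * (h (xp, y) - h (xp, ym) - ⟪ghy xp ym, y - ym⟫)) :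
    f (xm, ym) - f (xp, yp) ≥
      (1 / η - max L₁ L₂) * (σ / 2) * (‖xp - xm‖ ^ 2 + ‖yp - ym‖ ^ 2) :=
  bregman_palm_sufficient_decrease_general f h gfx gfy ghx ghy σ L₁ L₂ η hfx hfy hhx hhy hgfx hgfy
    hghx hghy hσ hrelx hrely hstrongx hstrongy hη0 hη1 xm ym xp yp hminx hminy
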